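/- Storage-rate simplification identity: let U, V, A, X̃, Y be finite-valued random variables such that U − (V, A) − (X̃, Y) and V − (A, X̃) − Y form Markov chains. Then I(A; X̃) + I(U, V; X̃ | A) − I(U, V; Y | A) = I(A; X̃) + I(V; X̃ | A, Y); equivalently, I(U,V; X̃ | A) − I(U,V; Y | A) = I(V; X̃ | A, Y). -/

import Mathlib

/-!
Write each entropy as an expected surprisal, `H(X) = -∑ ω, p ω log P(X = X ω)`. Then a Markov
chain `X − M − Y`, i.e. `P(x,m,y) P(m) = P(x,m) P(m,y)`, becomes a pointwise identity between
surprisals, whence `I(X;Y|M) = 0`; and the entropy of a tuple depends only on the partition of `Ω`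
it induces, so tuples may be reordered freely.

The first chain gives `I(U;X̃|V,A) = I(U;Y|V,A) = 0`, so `U` can be dropped:
`I(U,V;X̃|A) = I(V;X̃|A)` and `I(U,V;Y|A) = I(V;Y|A)`. The second gives `I(V;Y|A,X̃) = 0`, and
expanding `I(V;X̃,Y|A)` by the chain rule in both orders yields
`I(V;X̃|A) − I(V;Y|A) = I(V;X̃|A,Y)`.
-/

open scoped Classical
open Real

noncomputable section

namespace PA

/-- A probability mass function on a finite type, represented as a real-valued function. -/
def IsPMF {Ω : Type*} [Fintype Ω] (p : Ω → ℝ) : Prop :=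
  (∀ ω, 0 ≤ p ω) ∧ (∑ ω, p ω) = 1

/-- Probability of an event under the pmf `p`. -/
def probOf {Ω : Type*} [Fintype Ω] (p : Ω → ℝ) (E : Ω → Prop) : ℝ :=
  ∑ ω, if E ω then p ω else 0

/-- Shannon entropy (in bits, i.e. base-2 logarithm) of the random variable `X`
under the pmf `p`. -/
def ent {Ω α : Type*} [Fintype Ω] [Fintype α] (p : Ω → ℝ) (X : Ω → α) : ℝ :=
  (∑ a : α, Real.negMulLog (probOf p (fun ω => X ω = a))) / Real.log 2

/-- Conditional Shannon entropy `H(X | Z)` (in bits). -/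
def condEnt {Ω α β : Type*} [Fintype Ω] [Fintype α] [Fintype β]
    (p : Ω → ℝ) (X : Ω → α) (Z : Ω → β) : ℝ :=
  ent p (fun ω => (X ω, Z ω)) - ent p Z

/-- Mutual information `I(X;Y)` (in bits). -/
def mutInf {Ω α β : Type*} [Fintype Ω] [Fintype α] [Fintype β]
    (p : Ω → ℝ) (X : Ω → α) (Y : Ω → β) : ℝ :=
  ent p X + ent p Y - ent p (fun ω => (X ω, Y ω))

/-- Conditional mutual information `I(X;Y|Z)` (in bits). -/
def condMutInf {Ω α β γ : Type*} [Fintype Ω] [Fintype α] [Fintype β] [Fintype γ]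
    (p : Ω → ℝ) (X : Ω → α) (Y : Ω → β) (Z : Ω → γ) : ℝ :=
  ent p (fun ω => (X ω, Z ω)) + ent p (fun ω => (Y ω, Z ω))
    - ent p (fun ω => (X ω, Y ω, Z ω)) - ent p Z

/-- `X` and `Y` are conditionally independent given `M`, i.e. `X − M − Y` forms a
Markov chain. -/
def CondIndep {Ω α β γ : Type*} [Fintype Ω]
    (p : Ω → ℝ) (X : Ω → α) (M : Ω → β) (Y : Ω → γ) : Prop :=
  ∀ x m y,
    probOf p (fun ω => X ω = x ∧ M ω = m ∧ Y ω = y) * probOf p (fun ω => M ω = m)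
      = probOf p (fun ω => X ω = x ∧ M ω = m) * probOf p (fun ω => M ω = m ∧ Y ω = y)

end PA

namespace PA

section

variable {Ω α β γ δ : Type*} [Fintype Ω] {p : Ω → ℝ}

theorem probOf_congr {E F : Ω → Prop} (h : ∀ ω, E ω ↔ F ω) : probOf p E = probOf p F :=
  Finset.sum_congr rfl fun ω _ => if_congr (h ω) rfl rfl

theorem probOf_pos (hp : ∀ ω, 0 ≤ p ω) {E : Ω → Prop} {ω : Ω} (hE : E ω) (hω : 0 < p ω) :
    0 < probOf p E := by
  refine hω.trans_le ?_
  have := Finset.single_le_sum (f := fun ω => if E ω then p ω else 0)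
    (fun ω _ => by split_ifs <;> simp [hp ω]) (Finset.mem_univ ω)
  simpa [hE, probOf] using this

theorem probOf_and_comp_eq [Fintype γ] (E : Ω → Prop) (Y : Ω → γ) (f : γ → δ) (z : δ) :
    probOf p (fun ω => E ω ∧ f (Y ω) = z)
      = ∑ y, if f y = z then probOf p (fun ω => E ω ∧ Y ω = y) else 0 := by
  simp only [probOf, ← Finset.sum_filter]
  rw [Finset.sum_comm]
  refine Finset.sum_congr rfl fun ω _ => ?_
  by_cases hE : E ω <;> simp [hE, Finset.mem_filter]

theorem ent_eq_neg_sum_mul_log [Fintype α] (X : Ω → α) :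
    ent p X = -(∑ ω, p ω * Real.log (probOf p fun ω' => X ω' = X ω)) / Real.log 2 := by
  unfold ent
  congr 1
  simp only [Real.negMulLog, neg_mul, Finset.sum_neg_distrib, neg_inj]
  calc ∑ a, probOf p (fun ω => X ω = a) * Real.log (probOf p fun ω => X ω = a)
      = ∑ a, ∑ ω, if X ω = a then p ω * Real.log (probOf p fun ω' => X ω' = a) else 0 := by
        simp only [probOf, Finset.sum_mul, ite_mul, zero_mul]
    _ = ∑ ω, p ω * Real.log (probOf p fun ω' => X ω' = X ω) := by
        rw [Finset.sum_comm]
        simp only [Finset.sum_ite_eq, Finset.mem_univ, if_true]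

theorem ent_congr [Fintype α] [Fintype β] {X : Ω → α} {Y : Ω → β}
    (h : ∀ ω ω', X ω' = X ω ↔ Y ω' = Y ω := by intros; simp only [Prod.mk.injEq]; tauto) :
    ent p X = ent p Y := by
  simp only [ent_eq_neg_sum_mul_log, probOf_congr (h _)]

theorem CondIndep.comp_right [Fintype γ] {X : Ω → α} {M : Ω → β} {Y : Ω → γ}
    (h : CondIndep p X M Y) (f : γ → δ) : CondIndep p X M (fun ω => f (Y ω)) := by
  intro x m z
  have hXMY := probOf_and_comp_eq (p := p) (fun ω => X ω = x ∧ M ω = m) Y f z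
  have hMY := probOf_and_comp_eq (p := p) (fun ω => M ω = m) Y f z
  simp only [and_assoc] at hXMY
  rw [hXMY, hMY, Finset.sum_mul, Finset.mul_sum]
  refine Finset.sum_congr rfl fun y _ => ?_
  split_ifs
  · exact h x m y
  · simp

theorem condMutInf_eq_zero_of_condIndep [Fintype α] [Fintype β] [Fintype γ]
    (hp : ∀ ω, 0 ≤ p ω) {X : Ω → α} {M : Ω → β} {Y : Ω → γ} (h : CondIndep p X M Y) :
    condMutInf p X Y M = 0 := by
  have pointwise : ∀ ω,
      p ω * Real.log (probOf p fun ω' => (X ω', Y ω', M ω') = (X ω, Y ω, M ω))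
        + p ω * Real.log (probOf p fun ω' => M ω' = M ω)
      = p ω * Real.log (probOf p fun ω' => (X ω', M ω') = (X ω, M ω))
        + p ω * Real.log (probOf p fun ω' => (Y ω', M ω') = (Y ω, M ω)) := by
    intro ω
    rcases (hp ω).eq_or_lt with hω | hω
    · simp [← hω]
    simp only [Prod.mk.injEq]
    rw [probOf_congr (fun ω' => show X ω' = X ω ∧ Y ω' = Y ω ∧ M ω' = M ω
        ↔ X ω' = X ω ∧ M ω' = M ω ∧ Y ω' = Y ω by tauto),
      probOf_congr (fun ω' => show Y ω' = Y ω ∧ M ω' = M ω ↔ M ω' = M ω ∧ Y ω' = Y ω by tauto),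
      ← mul_add, ← mul_add,
      ← Real.log_mul, ← Real.log_mul, h]
    all_goals exact (probOf_pos hp (by simp) hω).ne'
  have hsum := Finset.sum_congr rfl fun ω (_ : ω ∈ Finset.univ) => pointwise ω
  simp only [Finset.sum_add_distrib] at hsum
  simp only [condMutInf, ent_eq_neg_sum_mul_log]
  linear_combination hsum / Real.log 2

variable [Fintype α] [Fintype β] [Fintype γ] [Fintype δ]

theorem condMutInf_prod_left_of_condIndep (hp : ∀ ω, 0 ≤ p ω)
    {U : Ω → α} {V : Ω → β} {A : Ω → γ} {X : Ω → δ}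
    (h : CondIndep p U (fun ω => (V ω, A ω)) X) :
    condMutInf p (fun ω => (U ω, V ω)) X A = condMutInf p V X A := by
  have hUX := condMutInf_eq_zero_of_condIndep hp h
  have e₁ : ent p (fun ω => ((U ω, V ω), A ω)) = ent p (fun ω => (U ω, V ω, A ω)) := ent_congr
  have e₂ : ent p (fun ω => ((U ω, V ω), X ω, A ω)) = ent p (fun ω => (U ω, X ω, V ω, A ω)) :=
    ent_congr
  have e₃ : ent p (fun ω => (X ω, V ω, A ω)) = ent p (fun ω => (V ω, X ω, A ω)) := ent_congr
  simp only [condMutInf] at hUX ⊢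
  linarith

theorem condMutInf_sub_condMutInf_of_condIndep (hp : ∀ ω, 0 ≤ p ω)
    {V : Ω → α} {A : Ω → β} {X : Ω → γ} {Y : Ω → δ}
    (h : CondIndep p V (fun ω => (A ω, X ω)) Y) :
    condMutInf p V X A - condMutInf p V Y A = condMutInf p V X (fun ω => (A ω, Y ω)) := by
  have hVY := condMutInf_eq_zero_of_condIndep hp h
  have e₁ : ent p (fun ω => (Y ω, A ω)) = ent p (fun ω => (A ω, Y ω)) := ent_congr
  have e₂ : ent p (fun ω => (V ω, Y ω, A ω)) = ent p (fun ω => (V ω, A ω, Y ω)) := ent_congr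
  have e₃ : ent p (fun ω => (V ω, X ω, A ω)) = ent p (fun ω => (V ω, A ω, X ω)) := ent_congr
  have e₄ : ent p (fun ω => (X ω, A ω, Y ω)) = ent p (fun ω => (Y ω, A ω, X ω)) := ent_congr
  have e₅ : ent p (fun ω => (V ω, X ω, A ω, Y ω)) = ent p (fun ω => (V ω, Y ω, A ω, X ω)) :=
    ent_congr
  have e₆ : ent p (fun ω => (X ω, A ω)) = ent p (fun ω => (A ω, X ω)) := ent_congr
  simp only [condMutInf] at hVY ⊢
  linarith

end

end PA

open PA

/-- Storage-rate simplification identity.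
If `U − (V,A) − (X̃,Y)` and `V − (A,X̃) − Y` form Markov chains, then
`I(A;X̃) + I(U,V;X̃|A) − I(U,V;Y|A) = I(A;X̃) + I(V;X̃|A,Y)` and equivalently
`I(U,V;X̃|A) − I(U,V;Y|A) = I(V;X̃|A,Y)`. -/
theorem storage_rate_simplification
    {Ω UT VT AT XtT YT : Type*} [Fintype Ω]
    [Fintype UT] [Fintype VT] [Fintype AT] [Fintype XtT] [Fintype YT]
    (p : Ω → ℝ) (hp : IsPMF p)
    (U : Ω → UT) (V : Ω → VT) (A : Ω → AT) (Xt : Ω → XtT) (Y : Ω → YT)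
    (hMC1 : CondIndep p U (fun ω => (V ω, A ω)) (fun ω => (Xt ω, Y ω)))
    (hMC2 : CondIndep p V (fun ω => (A ω, Xt ω)) Y) :
    mutInf p A Xt + condMutInf p (fun ω => (U ω, V ω)) Xt A
        - condMutInf p (fun ω => (U ω, V ω)) Y A
      = mutInf p A Xt + condMutInf p V Xt (fun ω => (A ω, Y ω))
    ∧ condMutInf p (fun ω => (U ω, V ω)) Xt A
        - condMutInf p (fun ω => (U ω, V ω)) Y A
      = condMutInf p V Xt (fun ω => (A ω, Y ω)) := by
  obtain ⟨hp, -⟩ := hp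
  have key : condMutInf p (fun ω => (U ω, V ω)) Xt A - condMutInf p (fun ω => (U ω, V ω)) Y A
      = condMutInf p V Xt (fun ω => (A ω, Y ω)) := by
    rw [condMutInf_prod_left_of_condIndep hp (hMC1.comp_right Prod.fst),
      condMutInf_prod_left_of_condIndep hp (hMC1.comp_right Prod.snd)]
    exact condMutInf_sub_condMutInf_of_condIndep hp hMC2
  exact ⟨by rw [add_sub_assoc, key], key⟩
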